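/- Every symmetric tensor T ∈ Sym(n,d) (n ≥ 2, d ≥ 2) has a symmetric best rank one approximation: there exist λ ∈ ℝ and a unit vector u ∈ S^{n−1} such that ‖T − λ·u^{⊗d}‖ ≤ ‖T − s·x₁⊗…⊗x_d‖ for all s ∈ ℝ and unit vectors x₁,…,x_d. -/

import Mathlib

/-!
For a unit decomposable tensor `X` one has `‖T - s X‖² = ‖T‖² - 2 s ⟨T, X⟩ + s²`, so a best
rank one approximation is `⟨T, X⟩ X` with `X = x₁ ⊗ ⋯ ⊗ x_d` maximizing `|⟨T, X⟩|` over unit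
vectors, and it suffices that for symmetric `T` this maximum is attained on the diagonal
`x₁ = ⋯ = x_d` (Banach). Among the maximizers pick one with `‖x₁ + ⋯ + x_d‖` maximal. If
`x_a ≠ x_b`, polarization of the symmetric bilinear form in the slots `a`, `b` shows that
replacing both `x_a` and `x_b` by `±(x_a + x_b) / ‖x_a + x_b‖` (by `±x_a` if
`x_a = -x_b`) gives again a maximizer, and for one of the two signs this increases
`‖x₁ + ⋯ + x_d‖`.
-/

noncomputable section

/-- The decomposable tensor `x₁ ⊗ ⋯ ⊗ x_d`, as a multi-indexed array. -/
def dtens {ι : Type*} [Fintype ι] {n : ι → ℕ} (x : ∀ j, Fin (n j) → ℝ) :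
    (∀ j, Fin (n j)) → ℝ :=
  fun idx => ∏ j, x j (idx j)

/-- Entrywise inner product of tensors. -/
def tinner {ι : Type*} [Fintype ι] [DecidableEq ι] {n : ι → ℕ}
    (S T : (∀ j, Fin (n j)) → ℝ) : ℝ :=
  ∑ idx, S idx * T idx

/-- Hilbert–Schmidt norm of a tensor. -/
def hsNorm {ι : Type*} [Fintype ι] [DecidableEq ι] {n : ι → ℕ}
    (T : (∀ j, Fin (n j)) → ℝ) : ℝ :=
  Real.sqrt (∑ idx, T idx ^ 2)

/-- `v` is a unit vector in `ℝ^m`. -/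
def isUnitVec {m : ℕ} (v : Fin m → ℝ) : Prop := ∑ i, v i ^ 2 = 1

/-- The spectral (`(∞,2)`-Schatten) norm of a tensor: the supremum of
`|⟨T, x₁ ⊗ ⋯ ⊗ x_d⟩|` over unit vectors `x_j`. -/
def specNorm {ι : Type*} [Fintype ι] [DecidableEq ι] {n : ι → ℕ}
    (T : (∀ j, Fin (n j)) → ℝ) : ℝ :=
  sSup {r | ∃ x : ∀ j, Fin (n j) → ℝ, (∀ j, isUnitVec (x j)) ∧ r = |tinner T (dtens x)|}

open Function

section SymmetricMultilinear

variable {E : Type*} [NormedAddCommGroup E] [InnerProductSpace ℝ E]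

lemma abs_apply_self_le_mul_norm_sq (B : E →ₗ[ℝ] E →ₗ[ℝ] ℝ) {M : ℝ}
    (hM : ∀ u, ‖u‖ = 1 → |B u u| ≤ M) (v : E) : |B v v| ≤ M * ‖v‖ ^ 2 := by
  rcases eq_or_ne v 0 with rfl | hv
  · simp
  · have hunit : ‖‖v‖⁻¹ • v‖ = 1 := by
      rw [norm_smul, norm_inv, norm_norm, inv_mul_cancel₀ (norm_ne_zero_iff.2 hv)]
    have hscale : B v v = ‖v‖ ^ 2 * B (‖v‖⁻¹ • v) (‖v‖⁻¹ • v) := by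
      simp only [map_smul, LinearMap.smul_apply, smul_eq_mul]
      field_simp
    rw [hscale, abs_mul, abs_of_nonneg (by positivity), mul_comm]
    exact mul_le_mul_of_nonneg_right (hM _ hunit) (by positivity)

/-- Polarization `4 B x y = B (x + y) (x + y) - B (x - y) (x - y)` together with
`‖x + y‖² + ‖x - y‖² = 4` forces equality in `|B v v| ≤ |B x y| ‖v‖²` at `v = x + y`. -/
lemma apply_add_add_eq_of_isMax (B : E →ₗ[ℝ] E →ₗ[ℝ] ℝ) (hB : ∀ x y, B x y = B y x)
    {x y : E} (hx : ‖x‖ = 1) (hy : ‖y‖ = 1) (hmax : ∀ u, ‖u‖ = 1 → |B u u| ≤ |B x y|) :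
    B (x + y) (x + y) = B x y * ‖x + y‖ ^ 2 := by
  have hpolar : B (x + y) (x + y) - B (x - y) (x - y) = 4 * B x y := by
    simp only [map_add, map_sub, LinearMap.add_apply, LinearMap.sub_apply, hB y x]
    ring
  have hpar : ‖x + y‖ ^ 2 + ‖x - y‖ ^ 2 = 4 := by
    rw [norm_add_sq_real, norm_sub_sq_real, hx, hy]
    ring
  have hplus := abs_le.1 (abs_apply_self_le_mul_norm_sq B hmax (x + y))
  have hminus := abs_le.1 (abs_apply_self_le_mul_norm_sq B hmax (x - y))
  rcases abs_cases (B x y) with ⟨habs, -⟩ | ⟨habs, -⟩ <;> rw [habs] at hplus hminus <;>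
    nlinarith

lemma norm_add_lt_max_norm_add_two_smul {W u w : E} (hw : ‖w‖ = 1) (hu : u = ‖u‖ • w)
    (hu2 : ‖u‖ < 2) : ‖W + u‖ < max ‖W + (2 : ℝ) • w‖ ‖W - (2 : ℝ) • w‖ := by
  by_contra! h
  have hplus := pow_le_pow_left₀ (norm_nonneg _) (max_le_iff.1 h).1 2
  have hminus := pow_le_pow_left₀ (norm_nonneg _) (max_le_iff.1 h).2 2
  rw [hu] at hplus hminus
  simp only [norm_add_sq_real, norm_sub_sq_real, inner_smul_right, norm_smul, hw,
    Real.norm_eq_abs, abs_norm] at hplus hminus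
  nlinarith [norm_nonneg u, abs_of_pos (two_pos (α := ℝ))]

variable {ι : Type*} [DecidableEq ι]

lemma update_update_comp_swap {α : Type*} (z : ι → α) {a b : ι} (hab : a ≠ b) (y w : α) :
    update (update z a y) b w ∘ Equiv.swap a b = update (update z a w) b y := by
  funext j
  rcases eq_or_ne j a with rfl | hja
  · simp [hab]
  rcases eq_or_ne j b with rfl | hjb
  · simp [hab]
  · simp [Equiv.swap_apply_of_ne_of_ne hja hjb, hja, hjb]

lemma sum_update_update [Fintype ι] {M : Type*} [AddCommGroup M] (z : ι → M) {a b : ι}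
    (hab : a ≠ b) (y w : M) :
    ∑ j, update (update z a y) b w j = ∑ j, z j - (z a + z b) + (y + w) := by
  have hsum : ∀ (g : ι → M) (i : ι) (v : M), ∑ j, update g i v j = ∑ j, g j - g i + v := by
    intro g i v
    rw [Finset.sum_update_of_mem (Finset.mem_univ i), ← Finset.sum_erase_eq_sub
      (Finset.mem_univ i), Finset.sdiff_singleton_eq_erase, add_comm]
  rw [hsum, hsum, update_of_ne hab.symm]
  abel

lemma norm_update_update_eq_one {F : Type*} [Norm F] {z : ι → F} (hz : ∀ j, ‖z j‖ = 1)
    {y : F} (hy : ‖y‖ = 1) {a b : ι} : ∀ j, ‖update (update z a y) b y j‖ = 1 := by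
  intro j
  rcases eq_or_ne j b with rfl | hjb
  · simpa
  rcases eq_or_ne j a with rfl | hja
  · simpa [hjb]
  · simpa [hja, hjb] using hz j

def pairForm (f : ContinuousMultilinearMap ℝ (fun _ : ι => E) ℝ) (z : ι → E) {a b : ι}
    (hab : a ≠ b) : E →ₗ[ℝ] E →ₗ[ℝ] ℝ :=
  LinearMap.mk₂ ℝ (fun y w => f (update (update z a y) b w))
    (fun y₁ y₂ w => by simp only [update_comm hab, f.map_update_add])
    (fun c y w => by simp only [update_comm hab, f.map_update_smul])
    (fun y w₁ w₂ => f.map_update_add _ _ _ _)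
    (fun c y w => f.map_update_smul _ _ _ _)

@[simp]
lemma pairForm_apply (f : ContinuousMultilinearMap ℝ (fun _ : ι => E) ℝ) (z : ι → E)
    {a b : ι} (hab : a ≠ b) (y w : E) :
    pairForm f z hab y w = f (update (update z a y) b w) := rfl

lemma exists_unit_pair_maximizer (f : ContinuousMultilinearMap ℝ (fun _ : ι => E) ℝ)
    (hf : ∀ (σ : Equiv.Perm ι) (x : ι → E), f (x ∘ σ) = f x) {z : ι → E}
    (hz : ∀ j, ‖z j‖ = 1) (hmax : ∀ x : ι → E, (∀ j, ‖x j‖ = 1) → |f x| ≤ |f z|)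
    {a b : ι} (hab : a ≠ b) :
    ∃ w : E, ‖w‖ = 1 ∧ z a + z b = ‖z a + z b‖ • w ∧
      |f (update (update z a w) b w)| = |f z| := by
  have hz_eq : pairForm f z hab (z a) (z b) = f z := by
    rw [pairForm_apply, update_eq_self, update_eq_self]
  set s := ‖z a + z b‖ with hs_def
  rcases eq_or_ne s 0 with hs | hs
  · have hopp : z a = -z b := eq_neg_of_add_eq_zero_left (norm_eq_zero.1 hs)
    refine ⟨z a, hz a, by rw [hs, zero_smul, norm_eq_zero.1 hs], ?_⟩
    rw [update_eq_self, hopp, ← neg_one_smul ℝ (z b), f.map_update_smul, update_eq_self,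
      smul_eq_mul, abs_mul, abs_neg, abs_one, one_mul]
  · have hw : ‖s⁻¹ • (z a + z b)‖ = 1 := by
      rw [norm_smul, norm_inv, norm_norm, inv_mul_cancel₀ hs]
    have hsym : ∀ x y, pairForm f z hab x y = pairForm f z hab y x := by
      intro x y
      rw [pairForm_apply, pairForm_apply, ← hf (Equiv.swap a b), update_update_comp_swap z hab]
    have hdiag := apply_add_add_eq_of_isMax (pairForm f z hab) hsym (hz a) (hz b)
      (fun u hu => hz_eq ▸ hmax _ (norm_update_update_eq_one hz hu))
    rw [← hs_def] at hdiag
    refine ⟨s⁻¹ • (z a + z b), hw, (smul_inv_smul₀ hs _).symm, ?_⟩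
    rw [← pairForm_apply f z hab]
    simp only [map_smul, LinearMap.smul_apply, smul_eq_mul, hdiag, hz_eq]
    field_simp

theorem exists_unit_diagonal_maximizer [Fintype ι] [Nonempty ι] [FiniteDimensional ℝ E]
    [Nontrivial E] (f : ContinuousMultilinearMap ℝ (fun _ : ι => E) ℝ)
    (hf : ∀ (σ : Equiv.Perm ι) (x : ι → E), f (x ∘ σ) = f x) :
    ∃ u : E, ‖u‖ = 1 ∧ ∀ x : ι → E, (∀ j, ‖x j‖ = 1) → |f x| ≤ |f fun _ => u| := by
  set S : Set (ι → E) := Set.univ.pi fun _ => Metric.sphere 0 1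
  have hS_iff : ∀ x, x ∈ S ↔ ∀ j, ‖x j‖ = 1 := by simp [S]
  have hS : IsCompact S := isCompact_univ_pi fun _ => isCompact_sphere 0 1
  obtain ⟨e, he⟩ := exists_norm_eq E zero_le_one
  have hcont : Continuous fun x => |f x| := continuous_abs.comp f.cont
  obtain ⟨x₀, hx₀, hmax₀⟩ :=
    hS.exists_isMaxOn ⟨fun _ => e, (hS_iff _).2 fun _ => he⟩ hcont.continuousOn
  set K := S ∩ {x | |f x| = |f x₀|}
  have hK : IsCompact K := hS.inter_right (isClosed_eq hcont continuous_const)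
  -- Among the maximizers of `|f|`, one with `‖∑ j, z j‖` maximal has all arguments equal.
  obtain ⟨z, ⟨hzS, hzM⟩, hzmax⟩ := hK.exists_isMaxOn ⟨x₀, hx₀, rfl⟩
    (continuous_norm.comp (continuous_finsetSum _ fun j _ => continuous_apply j)).continuousOn
  have hz := (hS_iff z).1 hzS
  have hmax : ∀ x : ι → E, (∀ j, ‖x j‖ = 1) → |f x| ≤ |f z| :=
    fun x hx => hzM.symm ▸ hmax₀ ((hS_iff x).2 hx)
  have hconst : ∀ a b, z a = z b := by
    by_contra! ⟨a, b, hne⟩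
    have hab : a ≠ b := fun h => hne (h ▸ rfl)
    obtain ⟨w, hw, hu, hfw⟩ := exists_unit_pair_maximizer f hf hz hmax hab
    have hfw' : |f (update (update z a (-w)) b (-w))| = |f z| := by
      rw [← pairForm_apply f z hab]
      simpa only [map_neg, LinearMap.neg_apply, neg_neg, pairForm_apply] using hfw
    have hlt : ‖z a + z b‖ < 2 := by
      have := norm_add_lt_of_not_sameRay
        ((not_sameRay_iff_of_norm_eq ((hz a).trans (hz b).symm)).2 hne)
      rwa [hz a, hz b, one_add_one_eq_two] at this
    have hmem : ∀ v : E, ‖v‖ = 1 → |f (update (update z a v) b v)| = |f z| →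
        ‖∑ j, update (update z a v) b v j‖ ≤ ‖∑ j, z j‖ := fun v hv hfv =>
      hzmax ⟨(hS_iff _).2 (norm_update_update_eq_one hz hv), hfv.trans hzM⟩
    have hplus := hmem w hw hfw
    have hminus := hmem (-w) (by rw [norm_neg, hw]) hfw'
    rw [sum_update_update z hab, ← two_smul ℝ w] at hplus
    rw [sum_update_update z hab, ← neg_add, ← two_smul ℝ w, ← sub_eq_add_neg] at hminus
    have := norm_add_lt_max_norm_add_two_smul (W := ∑ j, z j - (z a + z b)) hw hu hlt
    rw [sub_add_cancel] at this
    exact (this.trans_le (max_le hplus hminus)).false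
  refine ⟨z (Classical.arbitrary ι), hz _, fun x hx => ?_⟩
  have : (fun _ => z (Classical.arbitrary ι)) = z := funext fun j => hconst _ j
  exact this ▸ hmax x hx

end SymmetricMultilinear

section Tensor

variable {ι : Type*} [Fintype ι] [DecidableEq ι]

lemma sum_sq_dtens {n : ι → ℕ} {x : ∀ j, Fin (n j) → ℝ} (hx : ∀ j, isUnitVec (x j)) :
    ∑ idx, dtens x idx ^ 2 = 1 := by
  simp only [dtens, ← Finset.prod_pow]
  rw [← Fintype.prod_sum (fun j i => x j i ^ 2)]
  exact Finset.prod_eq_one fun j _ => hx j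

lemma hsNorm_sub_smul_le {n : ι → ℕ} {T U X : (∀ j, Fin (n j)) → ℝ}
    (hU : ∑ idx, U idx ^ 2 = 1) (hX : ∑ idx, X idx ^ 2 = 1)
    (h : |tinner T X| ≤ |tinner T U|) (s : ℝ) :
    hsNorm (T - tinner T U • U) ≤ hsNorm (T - s • X) := by
  have hexpand : ∀ (V : (∀ j, Fin (n j)) → ℝ) (c : ℝ), ∑ idx, V idx ^ 2 = 1 →
      ∑ idx, (T - c • V) idx ^ 2 = ∑ idx, T idx ^ 2 - 2 * c * tinner T V + c ^ 2 := by
    intro V c hV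
    simp only [tinner, Pi.sub_apply, Pi.smul_apply, smul_eq_mul, sub_sq, Finset.sum_add_distrib,
      Finset.sum_sub_distrib, mul_pow, ← Finset.mul_sum, hV, mul_one]
    rw [Finset.mul_sum]
    exact congrArg₂ _ (congrArg _ (Finset.sum_congr rfl fun _ _ => by ring)) rfl
  unfold hsNorm
  apply Real.sqrt_le_sqrt
  rw [hexpand U _ hU, hexpand X s hX]
  nlinarith [sq_le_sq.2 h, sq_nonneg (s - tinner T X)]

variable {n : ℕ}

def tensorForm (T : (ι → Fin n) → ℝ) :
    ContinuousMultilinearMap ℝ (fun _ : ι => EuclideanSpace ℝ (Fin n)) ℝ :=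
  ∑ idx, T idx • (ContinuousMultilinearMap.mkPiAlgebra ℝ ι ℝ).compContinuousLinearMap
    fun j => EuclideanSpace.proj (idx j)

lemma tensorForm_apply (T : (ι → Fin n) → ℝ) (x : ι → EuclideanSpace ℝ (Fin n)) :
    tensorForm T x = tinner T (dtens fun j => (x j).ofLp) := by
  simp [tensorForm, tinner, dtens]

lemma tensorForm_comp_perm {T : (ι → Fin n) → ℝ}
    (hT : ∀ (σ : Equiv.Perm ι) (idx : ι → Fin n), T (idx ∘ σ) = T idx) (σ : Equiv.Perm ι)
    (x : ι → EuclideanSpace ℝ (Fin n)) : tensorForm T (x ∘ σ) = tensorForm T x := by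
  simp only [tensorForm_apply, tinner, dtens, Function.comp_apply]
  refine Fintype.sum_equiv (Equiv.arrowCongr σ (Equiv.refl _)) _ _ fun idx => ?_
  change _ = T (idx ∘ σ.symm) * _
  rw [hT σ.symm]
  simpa using congrArg (T idx * ·) (Equiv.prod_comp σ fun k => (x k).ofLp (idx (σ.symm k)))

lemma isUnitVec_iff_norm_toLp (v : Fin n → ℝ) : isUnitVec v ↔ ‖WithLp.toLp 2 v‖ = 1 := by
  rw [EuclideanSpace.norm_eq, Real.sqrt_eq_one]
  simp [isUnitVec]

end Tensor

/-- Every real symmetric tensor `T ∈ Sym(n, d)` (`n, d ≥ 2`) has a symmetric best rank one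
approximation `λ · u^{⊗ d}`. -/
theorem stmt10 {n d : ℕ} (hn : 2 ≤ n) (hd : 2 ≤ d) (T : (Fin d → Fin n) → ℝ)
    (hsym : ∀ (σ : Equiv.Perm (Fin d)) (idx : Fin d → Fin n), T (idx ∘ σ) = T idx) :
    ∃ (lam : ℝ) (u : Fin n → ℝ), isUnitVec u ∧
      ∀ (s : ℝ) (x : Fin d → Fin n → ℝ), (∀ j, isUnitVec (x j)) →
        hsNorm (T - lam • dtens (fun _ : Fin d => u)) ≤ hsNorm (T - s • dtens x) := by
  have : NeZero n := ⟨by omega⟩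
  have : Nonempty (Fin d) := ⟨⟨0, by omega⟩⟩
  obtain ⟨u, hu, hmax⟩ :=
    exists_unit_diagonal_maximizer (tensorForm T) (tensorForm_comp_perm hsym)
  have hu' : isUnitVec u.ofLp := (isUnitVec_iff_norm_toLp _).2 hu
  refine ⟨_, u.ofLp, hu', fun s x hx => hsNorm_sub_smul_le (sum_sq_dtens fun _ => hu')
    (sum_sq_dtens hx) ?_ s⟩
  simpa [tensorForm_apply] using
    hmax (fun j => WithLp.toLp 2 (x j)) fun j => (isUnitVec_iff_norm_toLp _).1 (hx j)
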